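/- arXiv:1102.4674 — 5 statements merged into one kernel-verified Lean document; each statement's English description precedes it below -/
import Mathlib

section
/- In the construction of Lemma 3.2, the t matrices y^k,…,y^{k+t−1} (each obtained from the cycle x^k = (v_1,u_{r−t+1},v_2,u_{r−t+2},…,v_t,u_r) by replacing the vertex u_{r−j+1} with the new vertex u_{r+1}, for j = 1,…,t) satisfy y^k + y^{k+1} + ⋯ + y^{k+t−1} = (t−1)·x^k, where x^k is viewed as a t×(r+1) matrix with zero last column. -/
/-- Entry `(i,j)` of the matrix of the cycle `x^k = (v_1,u_{r−t+1},v_2,u_{r−t+2},…,v_t,u_r)`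
(zero-indexed: `+1` at `(i, r−t+i)` and `−1` at `(i+1 mod t, r−t+i)`). -/
def cycEnt (t r : ℕ) (i j : ℕ) : ℤ :=
  (if j = r - t + i then 1 else 0) - (if j = r - t + ((i + (t - 1)) % t) then 1 else 0)

/-- `x^k` viewed as a `t × (r+1)` matrix with zero last column. -/
def xkMat (t r : ℕ) : Matrix (Fin t) (Fin (r+1)) ℤ := fun a b => cycEnt t r (a : ℕ) (b : ℕ)

/-- `y^{k+j}` (zero-indexed `j = 0,…,t−1`, the paper's `j+1`): obtained from `x^k` by replacing
vertex `u_{r−j}` (zero-indexed column `r−1−j`) with the new vertex `u_{r+1}` (column `r`). -/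
def yMat (t r j : ℕ) : Matrix (Fin t) (Fin (r+1)) ℤ :=
  fun a b =>
    if (b : ℕ) = r then cycEnt t r (a : ℕ) (r - 1 - j)
    else if (b : ℕ) = r - 1 - j then 0
    else cycEnt t r (a : ℕ) (b : ℕ)

lemma aux_one (t r c : ℕ) (htr : t ≤ r) (h1 : r - t ≤ c) (h2 : c < r) :
    ∑ j ∈ Finset.range t, (if r - 1 - j = c then (1:ℤ) else 0) = 1 := by
  rw [Finset.sum_congr rfl (fun j hj => ?_), Finset.sum_ite_eq' (Finset.range t) (r - 1 - c)
    (fun _ => (1:ℤ))]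
  · simp only [Finset.mem_range]
    rw [if_pos (by omega)]
  · simp only [Finset.mem_range] at hj
    congr 1
    simp only [eq_iff_iff]
    omega

theorem sum_yMat_eq_smul_xkMat (t r : ℕ) (ht : 4 ≤ t) (htr : t ≤ r) :
    ∑ j : Fin t, yMat t r (j : ℕ) = ((t : ℤ) - 1) • xkMat t r := by
  ext a b
  have ha : (a : ℕ) < t := a.isLt
  have hb : (b : ℕ) < r + 1 := b.isLt
  have hm : ((a : ℕ) + (t - 1)) % t < t := Nat.mod_lt _ (by omega)
  set m := ((a : ℕ) + (t - 1)) % t with hmdef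
  rw [Matrix.sum_apply, Matrix.smul_apply,
    Fin.sum_univ_eq_sum_range (fun j => yMat t r j a b)]
  simp only [yMat, xkMat, smul_eq_mul]
  by_cases hbr : (b : ℕ) = r
  · simp only [hbr, eq_self_iff_true, if_true]
    have hrhs : cycEnt t r (a : ℕ) r = 0 := by
      simp only [cycEnt, ← hmdef]
      rw [if_neg (by omega), if_neg (by omega)]
      ring
    rw [hrhs, mul_zero]
    simp only [cycEnt, ← hmdef, Finset.sum_sub_distrib]
    rw [aux_one t r (r - t + a) htr (by omega) (by omega),
      aux_one t r (r - t + m) htr (by omega) (by omega)]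
    ring
  · simp only [if_neg hbr]
    by_cases hlow : (b : ℕ) < r - t
    · have hz : cycEnt t r (a : ℕ) (b : ℕ) = 0 := by
        simp only [cycEnt, ← hmdef]
        rw [if_neg (by omega), if_neg (by omega)]
        ring
      rw [hz, mul_zero]
      refine Finset.sum_eq_zero fun j hj => ?_
      simp only [Finset.mem_range] at hj
      rw [if_neg (show ¬ (b:ℕ) = r - 1 - j by omega)]
    · have : ∀ j ∈ Finset.range t,
          (if (b : ℕ) = r - 1 - j then (0:ℤ) else cycEnt t r (a : ℕ) (b : ℕ))
          = cycEnt t r (a : ℕ) (b : ℕ)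
            - (if j = r - 1 - (b : ℕ) then cycEnt t r (a : ℕ) (b : ℕ) else 0) := by
        intro j hj
        simp only [Finset.mem_range] at hj
        by_cases h : j = r - 1 - (b : ℕ)
        · rw [if_pos (by omega), if_pos h]; ring
        · rw [if_neg (by omega), if_neg h]; ring
      rw [Finset.sum_congr rfl this, Finset.sum_sub_distrib, Finset.sum_const,
        Finset.sum_ite_eq' (Finset.range t) (r - 1 - (b : ℕ))]
      rw [if_pos (by simp only [Finset.mem_range]; omega)]
      simp only [Finset.card_range, nsmul_eq_mul]
      ring
end

section
/- Proposition 2.2: If h = (h_1,…,h_k) is a primitive relation on circuits x^1,…,x^k of an integer matrix A, then the Graver complexity of A satisfies g(A) ≥ h_1 + ⋯ + h_k. -/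
/-- `u ⊑ v` iff `|u i| ≤ |v i|` and `u i * v i ≥ 0` for all `i`. -/
def sqle {ι : Type*} (u v : ι → ℤ) : Prop := ∀ i, |u i| ≤ |v i| ∧ 0 ≤ u i * v i

/-- Membership in the Graver basis of `A`: a `⊑`-minimal nonzero element of `ker_ℤ(A)`. -/
def inGraver {R C : Type*} [Fintype C] (A : Matrix R C ℤ) (x : C → ℤ) : Prop :=
  A.mulVec x = 0 ∧ x ≠ 0 ∧
    ∀ y : C → ℤ, A.mulVec y = 0 → y ≠ 0 → sqle y x → y = x

/-- The `h`-th Lawrence lifting of `A`. -/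
def lawrence {R C : Type*} [DecidableEq C] (A : Matrix R C ℤ) (h : ℕ) :
    Matrix ((Fin h × R) ⊕ C) (Fin h × C) ℤ :=
  fun row col =>
    match row with
    | Sum.inl (i, a) => if i = col.1 then A a col.2 else 0
    | Sum.inr b => if b = col.2 then 1 else 0

/-- The type of `x ∈ ℤ^{h·C}`: the number of nonzero blocks. -/
noncomputable def typeOf {C : Type*} {h : ℕ} (x : Fin h × C → ℤ) : ℕ :=
  Nat.card {i : Fin h // ∃ b, x (i, b) ≠ 0}

/-- The Graver complexity `g(A)`. -/
noncomputable def graverComplexity {R C : Type*} [Fintype C] [DecidableEq C]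
    (A : Matrix R C ℤ) : ℕ∞ :=
  sSup (insert 0 {m : ℕ∞ | ∃ h : ℕ, 1 ≤ h ∧
    ∃ x : Fin h × C → ℤ, inGraver (lawrence A h) x ∧ (typeOf x : ℕ∞) = m})

/-- A circuit of `A`: a nonzero element of `ker_ℤ(A)` with inclusion-minimal support
whose nonzero entries are relatively prime. -/
def isCircuitVec {R C : Type*} [Fintype C] (A : Matrix R C ℤ) (x : C → ℤ) : Prop :=
  A.mulVec x = 0 ∧ x ≠ 0 ∧
  (∀ y : C → ℤ, A.mulVec y = 0 → y ≠ 0 →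
    (∀ j, y j ≠ 0 → x j ≠ 0) → (∀ j, x j ≠ 0 → y j ≠ 0)) ∧
  Finset.univ.gcd x = 1

/-- A primitive relation on `x^1,…,x^k`. -/
def isPrimitiveRelationVec {C : Type*} {k : ℕ} (h : Fin k → ℤ) (x : Fin k → (C → ℤ)) : Prop :=
  (∀ i, 0 < h i) ∧ Finset.univ.gcd h = 1 ∧ (∑ i, h i • x i = 0) ∧
  (∀ (c : Fin k → ℤ) (i₀ : Fin k), c i₀ = 0 → ∑ i, c i • x i = 0 → c = 0)

lemma circuit_dichotomy {s n : ℕ} (A : Matrix (Fin s) (Fin n) ℤ) (x y : Fin n → ℤ)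
    (hx : isCircuitVec A x) (hyk : A.mulVec y = 0) (hs : sqle y x) : y = 0 ∨ y = x := by
  by_cases hy0 : y = 0
  · exact Or.inl hy0
  obtain ⟨hxk, hxne, hxmin, hxgcd⟩ := hx
  have hsupp : ∀ j, y j ≠ 0 → x j ≠ 0 := by
    intro j hyj hxj
    have h1 := (hs j).1
    rw [hxj, abs_zero] at h1
    exact hyj (abs_nonpos_iff.mp h1)
  have hsupp2 := hxmin y hyk hy0 hsupp
  obtain ⟨b₀, hb₀'⟩ := Function.ne_iff.mp hxne
  have hb₀ : x b₀ ≠ 0 := by simpa using hb₀'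
  set z : Fin n → ℤ := x b₀ • y - y b₀ • x with hzdef
  have hzk : A.mulVec z = 0 := by
    rw [hzdef, Matrix.mulVec_sub, Matrix.mulVec_smul, Matrix.mulVec_smul, hyk, hxk]
    simp
  have hz0 : z b₀ = 0 := by simp [hzdef, smul_eq_mul]; ring
  have hz : z = 0 := by
    by_contra hzne
    have h1 : ∀ j, z j ≠ 0 → x j ≠ 0 := by
      intro j hzj hxj
      have hyj : y j = 0 := by
        by_contra h'
        exact hsupp j h' hxj
      apply hzj
      simp [hzdef, hxj, hyj]
    exact hxmin z hzk hzne h1 b₀ hb₀ hz0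
  have heq : ∀ b, x b₀ * y b = y b₀ * x b := by
    intro b
    have h1 := congrFun hz b
    simp only [hzdef, Pi.sub_apply, Pi.smul_apply, smul_eq_mul, Pi.zero_apply] at h1
    linarith
  have hdvd : x b₀ ∣ y b₀ := by
    have h1 : x b₀ ∣ Finset.univ.gcd (fun b => y b₀ * x b) :=
      Finset.dvd_gcd fun b _ => ⟨y b, (heq b).symm⟩
    rw [Finset.gcd_mul_left, hxgcd, mul_one, ← Int.abs_eq_normalize] at h1
    exact (dvd_abs _ _).mp h1
  obtain ⟨q, hq⟩ := hdvd
  have hyq : ∀ b, y b = q * x b := by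
    intro b
    apply mul_left_cancel₀ hb₀
    rw [heq b, hq]; ring
  have hq0 : 0 ≤ q := by
    have h1 := (hs b₀).2
    rw [hyq b₀] at h1
    nlinarith [mul_self_pos.mpr hb₀]
  have hq1 : q ≤ 1 := by
    have h1 := (hs b₀).1
    rw [hyq b₀, abs_mul] at h1
    have hxpos : 0 < |x b₀| := abs_pos.mpr hb₀
    have h2 : |q| ≤ 1 := by nlinarith [le_abs_self q]
    calc q ≤ |q| := le_abs_self q
      _ ≤ 1 := h2
  have hqne : q ≠ 0 := by
    intro h0
    apply hsupp2 b₀ hb₀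
    rw [hyq b₀, h0, zero_mul]
  have hq1' : q = 1 := by omega
  right
  funext b
  rw [hyq b, hq1', one_mul]

lemma prim_proportional {n k : ℕ} (x : Fin k → (Fin n → ℤ)) (h : Fin k → ℤ)
    (hprim : isPrimitiveRelationVec h x) (i₀ : Fin k) (c : Fin k → ℤ)
    (hc : ∑ i, c i • x i = 0) : ∃ t : ℤ, ∀ i, c i = t * h i := by
  obtain ⟨hpos, hgcd, hrel, hmin⟩ := hprim
  have key : ∀ i, h i₀ * c i = c i₀ * h i := by
    intro i
    set d : Fin k → ℤ := fun i => h i₀ * c i - c i₀ * h i with hd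
    have hd0 : d i₀ = 0 := by simp [hd]; ring
    have hdrel : ∑ i, d i • x i = 0 := by
      have hterm : ∀ i, d i • x i = h i₀ • (c i • x i) - c i₀ • (h i • x i) := by
        intro i; simp [hd, sub_smul, mul_smul]
      simp only [hterm, Finset.sum_sub_distrib, ← Finset.smul_sum, hc, hrel, smul_zero, sub_zero]
    have hz := hmin d i₀ hd0 hdrel
    have h1 := congrFun hz i
    simp only [hd, Pi.zero_apply] at h1
    linarith
  have hdvd : h i₀ ∣ c i₀ := by
    have h1 : h i₀ ∣ Finset.univ.gcd (fun i => c i₀ * h i) :=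
      Finset.dvd_gcd fun i _ => ⟨c i, (key i).symm⟩
    rw [Finset.gcd_mul_left, hgcd, mul_one, ← Int.abs_eq_normalize] at h1
    exact (dvd_abs _ _).mp h1
  obtain ⟨t, ht⟩ := hdvd
  refine ⟨t, fun i => mul_left_cancel₀ (hpos i₀).ne' ?_⟩
  rw [key i, ht]; ring

lemma sum_equiv_sigma {k N : ℕ} {g : Fin k → ℕ} (e : (Σ i : Fin k, Fin (g i)) ≃ Fin N)
    {M : Type*} [AddCommMonoid M] (v : Fin N → M) :
    ∑ j, v j = ∑ i, ∑ m : Fin (g i), v (e ⟨i, m⟩) := by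
  rw [← Equiv.sum_comp e v, ← Finset.univ_sigma_univ, Finset.sum_sigma]

lemma lawrence_mulVec_inl {s n N : ℕ} (A : Matrix (Fin s) (Fin n) ℤ)
    (v : Fin N × Fin n → ℤ) (j : Fin N) (a : Fin s) :
    (lawrence A N).mulVec v (Sum.inl (j, a)) = A.mulVec (fun b => v (j, b)) a := by
  show ∑ q : Fin N × Fin n, lawrence A N (Sum.inl (j, a)) q * v q = _
  rw [Fintype.sum_prod_type]
  simp only [lawrence, ite_mul, zero_mul]
  rw [Finset.sum_comm]
  simp only [Finset.sum_ite_eq, Finset.mem_univ, if_true]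
  rfl

lemma lawrence_mulVec_inr {s n N : ℕ} (A : Matrix (Fin s) (Fin n) ℤ)
    (v : Fin N × Fin n → ℤ) (b : Fin n) :
    (lawrence A N).mulVec v (Sum.inr b) = ∑ j, v (j, b) := by
  show ∑ q : Fin N × Fin n, lawrence A N (Sum.inr b) q * v q = _
  rw [Fintype.sum_prod_type]
  simp only [lawrence, ite_mul, zero_mul, one_mul, Finset.sum_ite_eq, Finset.mem_univ, if_true]

theorem graverComplexity_ge_of_primitive {s n k : ℕ} (A : Matrix (Fin s) (Fin n) ℤ)
    (x : Fin k → (Fin n → ℤ)) (h : Fin k → ℤ)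
    (hcirc : ∀ i, isCircuitVec A (x i)) (hprim : isPrimitiveRelationVec h x) :
    ((∑ i, h i).toNat : ℕ∞) ≤ graverComplexity A := by
  classical
  rcases Nat.eq_zero_or_pos k with hk | hk
  · subst hk
    simp only [Finset.univ_eq_empty, Finset.sum_empty, Int.toNat_zero, Nat.cast_zero]
    exact le_sSup (Set.mem_insert _ _)
  have hpos := hprim.1
  set N := ∑ i, (h i).toNat with hN
  have htn : ∀ i, ((h i).toNat : ℤ) = h i := fun i => Int.toNat_of_nonneg (hpos i).le
  have hNsum : (∑ i, h i).toNat = N := by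
    have h1 : (∑ i, h i) = ((N : ℕ) : ℤ) := by
      rw [hN, Nat.cast_sum]
      exact Finset.sum_congr rfl fun i _ => (htn i).symm
    rw [h1, Int.toNat_natCast]
  set i₀ : Fin k := ⟨0, hk⟩ with hi₀
  have hN1 : 1 ≤ N := by
    have h1 : 1 ≤ (h i₀).toNat := by have := hpos i₀; omega
    have h2 : (h i₀).toNat ≤ N :=
      Finset.single_le_sum (f := fun i => (h i).toNat) (fun i _ => Nat.zero_le _)
        (Finset.mem_univ i₀)
    omega
  have hcard : Fintype.card (Σ i : Fin k, Fin (h i).toNat) = N := by simp [hN]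
  set e := Fintype.equivFinOfCardEq hcard with he
  set σ : Fin N → Fin k := fun j => (e.symm j).1 with hσ
  have hσe : ∀ (i : Fin k) (m : Fin (h i).toNat), σ (e ⟨i, m⟩) = i := by
    intro i m; simp [hσ]
  set X : Fin N × Fin n → ℤ := fun p => x (σ p.1) p.2 with hX
  -- block sum of X is zero
  have hblocksum : ∑ j, x (σ j) = 0 := by
    rw [sum_equiv_sigma e (fun j => x (σ j))]
    have h1 : ∀ i ∈ Finset.univ, (∑ m : Fin (h i).toNat, x (σ (e ⟨i, m⟩))) = h i • x i := by
      intro i _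
      rw [Finset.sum_congr rfl fun m _ => by rw [hσe]]
      rw [Finset.sum_const, Finset.card_univ, Fintype.card_fin]
      calc (h i).toNat • x i = ((h i).toNat : ℤ) • x i := (natCast_zsmul _ _).symm
        _ = h i • x i := by rw [htn]
    rw [Finset.sum_congr rfl h1]
    exact hprim.2.2.1
  -- kernel
  have hXker : (lawrence A N).mulVec X = 0 := by
    funext r
    cases r with
    | inl p =>
      obtain ⟨i, a⟩ := p
      show (lawrence A N).mulVec X (Sum.inl (i, a)) = 0
      rw [lawrence_mulVec_inl]
      exact congrFun (hcirc (σ i)).1 a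
    | inr b =>
      show (lawrence A N).mulVec X (Sum.inr b) = 0
      rw [lawrence_mulVec_inr]
      have h2 := congrFun hblocksum b
      rw [Finset.sum_apply] at h2
      exact h2
  have hXne : X ≠ 0 := by
    intro h0
    apply (hcirc (σ ⟨0, hN1⟩)).2.1
    funext b
    exact congrFun h0 (⟨0, hN1⟩, b)
  -- minimality
  have hXmin : ∀ y : Fin N × Fin n → ℤ, (lawrence A N).mulVec y = 0 → y ≠ 0 → sqle y X → y = X := by
    intro y hyk hyne hsq
    have hyA : ∀ j, A.mulVec (fun b => y (j, b)) = 0 := by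
      intro j
      funext a
      have h1 := congrFun hyk (Sum.inl (j, a))
      rw [lawrence_mulVec_inl] at h1
      simpa using h1
    have hysum : ∀ b, ∑ j, y (j, b) = 0 := by
      intro b
      have h1 := congrFun hyk (Sum.inr b)
      rw [lawrence_mulVec_inr] at h1
      simpa using h1
    have hdich : ∀ j, (fun b => y (j, b)) = 0 ∨ (fun b => y (j, b)) = x (σ j) := by
      intro j
      exact circuit_dichotomy A (x (σ j)) _ (hcirc (σ j)) (hyA j) (fun b => hsq (j, b))
    set sv : Fin N → ℤ := fun j => if (fun b => y (j, b)) = 0 then 0 else 1 with hsv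
    have hs_blocks : ∀ j, (fun b => y (j, b)) = sv j • x (σ j) := by
      intro j
      by_cases h0 : (fun b => y (j, b)) = 0
      · rw [h0]; simp [hsv, h0]
      · simp only [hsv, h0, if_neg, if_false, one_smul]
        exact (hdich j).resolve_left h0
    have hs01 : ∀ j, sv j = 0 ∨ sv j = 1 := by
      intro j; simp only [hsv]; split <;> simp
    set c : Fin k → ℤ := fun i => ∑ m : Fin (h i).toNat, sv (e ⟨i, m⟩) with hc
    have hcrel : ∑ i, c i • x i = 0 := by
      have h1 : ∑ j, sv j • x (σ j) = 0 := by
        have h2 : ∀ j ∈ Finset.univ, sv j • x (σ j) = (fun b => y (j, b)) :=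
          fun j _ => (hs_blocks j).symm
        rw [Finset.sum_congr rfl h2]
        funext b
        rw [Finset.sum_apply]
        exact hysum b
      rw [sum_equiv_sigma e (fun j => sv j • x (σ j))] at h1
      rw [← h1]
      refine Finset.sum_congr rfl fun i _ => ?_
      rw [hc, Finset.sum_smul]
      exact Finset.sum_congr rfl fun m _ => by rw [hσe]
    have hc0 : ∀ i, 0 ≤ c i :=
      fun i => Finset.sum_nonneg fun m _ => by rcases hs01 (e ⟨i, m⟩) with h' | h' <;> omega
    have hch : ∀ i, c i ≤ h i := by
      intro i
      calc c i ≤ ∑ _m : Fin (h i).toNat, 1 :=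
            Finset.sum_le_sum fun m _ => by rcases hs01 (e ⟨i, m⟩) with h' | h' <;> omega
        _ = h i := by
            rw [Finset.sum_const, Finset.card_univ, Fintype.card_fin, nsmul_eq_mul, mul_one, htn]
    obtain ⟨t, ht⟩ := prim_proportional x h hprim i₀ c hcrel
    have ht01 : t = 0 ∨ t = 1 := by
      have h1 := hc0 i₀
      have h2 := hch i₀
      have h3 := hpos i₀
      rw [ht i₀] at h1 h2
      rcases lt_trichotomy t 0 with h' | h' | h'
      · nlinarith
      · left; exact h'
      · right; nlinarith
    have hsval : ∀ j, sv j = t := by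
      have hp : ∀ p : (Σ i : Fin k, Fin (h i).toNat), sv (e p) = t := by
        rcases ht01 with ht0 | ht1
        · intro p
          obtain ⟨i, m⟩ := p
          have hz : ∑ m : Fin (h i).toNat, sv (e ⟨i, m⟩) = 0 := by
            have h1 := ht i
            rw [ht0, zero_mul] at h1
            exact h1
          have := (Finset.sum_eq_zero_iff_of_nonneg
            (fun m _ => by rcases hs01 (e ⟨i, m⟩) with h' | h' <;> omega)).mp hz m (Finset.mem_univ m)
          rw [ht0]; exact this
        · intro p
          obtain ⟨i, m⟩ := p
          have hz : ∑ m : Fin (h i).toNat, (1 - sv (e ⟨i, m⟩)) = 0 := by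
            have h1 : ∑ m : Fin (h i).toNat, sv (e ⟨i, m⟩) = h i := by
              have h2 := ht i
              rw [ht1, one_mul] at h2
              exact h2
            rw [Finset.sum_sub_distrib, h1, Finset.sum_const, Finset.card_univ,
              Fintype.card_fin, nsmul_eq_mul, mul_one, htn, sub_self]
          have := (Finset.sum_eq_zero_iff_of_nonneg
            (fun m _ => by rcases hs01 (e ⟨i, m⟩) with h' | h' <;> omega)).mp hz m (Finset.mem_univ m)
          rw [ht1]; omega
      intro j
      have := hp (e.symm j)
      rwa [Equiv.apply_symm_apply] at this
    rcases ht01 with ht0 | ht1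
    · exfalso
      apply hyne
      funext p
      obtain ⟨j, b⟩ := p
      have h1 := congrFun (hs_blocks j) b
      rw [hsval j, ht0, zero_smul] at h1
      exact h1
    · funext p
      obtain ⟨j, b⟩ := p
      have h1 := congrFun (hs_blocks j) b
      rw [hsval j, ht1, one_smul] at h1
      exact h1
  -- type
  have htype : typeOf X = N := by
    rw [typeOf, Nat.card_congr (Equiv.subtypeUnivEquiv ?_), Nat.card_eq_fintype_card,
      Fintype.card_fin]
    intro j
    have h1 := (hcirc (σ j)).2.1
    rw [Function.ne_iff] at h1
    obtain ⟨b, hb⟩ := h1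
    exact ⟨b, by simpa using hb⟩
  rw [hNsum]
  exact le_sSup (Set.mem_insert_of_mem _ ⟨N, hN1, X, ⟨hXker, hXne, hXmin⟩, by rw [htype]⟩)
end

section
/- Define the sequence a(t) by a(4) = 30 and a(t+1) = (t−1)(a(t) − 1) + 2t for t ≥ 4. Then for all t ≥ 4, a(t) = (t−2)!·(15 + Σ_{i=1}^{t−4} (i+4)/(i+2)!). -/
theorem closed_form_a (a : ℕ → ℚ) (h4 : a 4 = 30)
    (hrec : ∀ t : ℕ, 4 ≤ t → a (t + 1) = ((t : ℚ) - 1) * (a t - 1) + 2 * t) :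
    ∀ t : ℕ, 4 ≤ t →
      a t = (Nat.factorial (t - 2) : ℚ) *
        (15 + ∑ i ∈ Finset.Icc 1 (t - 4), ((i : ℚ) + 4) / (Nat.factorial (i + 2) : ℚ)) := by
  intro t ht
  induction t, ht using Nat.le_induction with
  | base => norm_num [h4, Nat.factorial]
  | succ t ht ih =>
    rw [hrec t ht, ih]
    have h1 : t + 1 - 4 = (t - 4) + 1 := by omega
    have h2 : t + 1 - 2 = (t - 2) + 1 := by omega
    have h3 : (t - 4 : ℕ) + 1 + 2 = (t - 2) + 1 := by omega
    rw [h1, h2, Finset.sum_Icc_succ_top (by omega), h3, Nat.factorial_succ]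
    have hc2 : ((t - 2 : ℕ) : ℚ) = (t : ℚ) - 2 := by
      push_cast [Nat.cast_sub (by omega : 2 ≤ t)]; ring
    have hc4 : ((t - 4 : ℕ) : ℚ) = (t : ℚ) - 4 := by
      push_cast [Nat.cast_sub (by omega : 4 ≤ t)]; ring
    have hfpos : ((Nat.factorial (t - 2) : ℚ)) ≠ 0 := by
      exact_mod_cast Nat.factorial_ne_zero _
    push_cast [hc2, hc4]
    have hne : (t : ℚ) - 1 ≠ 0 := by
      have : (4:ℚ) ≤ (t:ℚ) := by exact_mod_cast ht
      linarith
    have hne' : (t : ℚ) - 2 + 1 ≠ 0 := by intro h; apply hne; linarith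
    field_simp
    ring
end

section
/- In the setting of Lemma 3.2, any integer relation h' on the circuits y^1,…,y^{k+t−1} of A_{t,r+1} must satisfy h'_k = h'_{k+1} = ⋯ = h'_{k+t−1} (equality of the last t coefficients), as forced by examining the column indexed by the new vertex u_{r+1}. -/
/-!
In the column of the new vertex the old circuits vanish, so the relation restricts to
`∑ j, d j • q^j = 0`. Since `q^j = e_j - e_{j+1}` (indices mod `t`), coordinate `a` of this sum
is `d a - d (a - 1)`; thus `d` is invariant under the cyclic shift of `Fin t`, hence constant.
-/

/-- The vectors `q^j ∈ ℤ^t` with `q^j_j = 1`, `q^j_{j+1 mod t} = −1`, other entries `0`. -/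
def qvec (t : ℕ) (j : Fin t) : Fin t → ℤ :=
  fun a => (if a = j then 1 else 0) - (if (a : ℕ) = ((j : ℕ) + 1) % t then 1 else 0)

theorem qvec_eq_single_sub_single {n : ℕ} (j : Fin (n + 1)) :
    qvec (n + 1) j = Pi.single j 1 - Pi.single (j + 1) 1 := by
  ext a
  have hsucc : ((a : ℕ) = ((j : ℕ) + 1) % (n + 1)) ↔ a = j + 1 := by
    rw [Fin.ext_iff, Fin.val_add, Fin.val_one', Nat.add_mod_mod]
  simp only [qvec, hsucc, Pi.sub_apply, Pi.single_apply]

theorem sum_smul_qvec_apply {n : ℕ} (d : Fin (n + 1) → ℤ) (a : Fin (n + 1)) :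
    (∑ j, d j • qvec (n + 1) j) a = d a - d (a - 1) := by
  simp only [qvec_eq_single_sub_single, smul_sub, Finset.sum_sub_distrib, Pi.sub_apply,
    Finset.sum_apply, Pi.smul_apply, Pi.single_apply, smul_eq_mul, mul_ite, mul_one, mul_zero,
    ← sub_eq_iff_eq_add, Finset.sum_ite_eq, Finset.mem_univ, if_true]

theorem Fin.apply_eq_apply_zero_of_apply_add_one {α : Type*} {n : ℕ} {f : Fin (n + 1) → α}
    (hf : ∀ a, f (a + 1) = f a) (a : Fin (n + 1)) : f a = f 0 := by
  induction a using Fin.induction with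
  | zero => rfl
  | succ i ih => rw [← Fin.coeSucc_eq_succ, hf, ih]

theorem eq_of_sum_smul_qvec_eq_zero {t : ℕ} {d : Fin t → ℤ} (h : ∑ j, d j • qvec t j = 0)
    (j j' : Fin t) : d j = d j' := by
  obtain ⟨n, rfl⟩ : ∃ n, t = n + 1 := Nat.exists_eq_add_one_of_ne_zero j.pos.ne'
  have hshift (a : Fin (n + 1)) : d (a + 1) = d a := by
    have h_coord := congrFun h (a + 1)
    rwa [sum_smul_qvec_apply, add_sub_cancel_right, Pi.zero_apply, sub_eq_zero] at h_coord
  rw [Fin.apply_eq_apply_zero_of_apply_add_one hshift j,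
    Fin.apply_eq_apply_zero_of_apply_add_one hshift j']

theorem last_coeffs_equal_general (t r m : ℕ)
    (yold : Fin m → Matrix (Fin t) (Fin (r + 1)) ℤ)
    (ynew : Fin t → Matrix (Fin t) (Fin (r + 1)) ℤ)
    (hyold : ∀ i a, yold i a (Fin.last r) = 0)
    (hynew : ∀ j a, ynew j a (Fin.last r) = qvec t j a)
    (c : Fin m → ℤ) (d : Fin t → ℤ)
    (hrel : (∑ i, c i • yold i) + (∑ j, d j • ynew j) = 0) :
    ∀ j j' : Fin t, d j = d j' := by
  have hlast_col : ∑ j, d j • qvec t j = 0 := funext fun a => by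
    simpa [Matrix.sum_apply, hyold, hynew] using congrFun (congrFun hrel a) (Fin.last r)
  exact eq_of_sum_smul_qvec_eq_zero hlast_col

theorem last_coeffs_equal (t r m : ℕ) (ht : 4 ≤ t) (htr : t ≤ r)
    (yold : Fin m → Matrix (Fin t) (Fin (r + 1)) ℤ)
    (ynew : Fin t → Matrix (Fin t) (Fin (r + 1)) ℤ)
    (hyold : ∀ i a, yold i a (Fin.last r) = 0)
    (hynew : ∀ j a, ynew j a (Fin.last r) = qvec t j a)
    (c : Fin m → ℤ) (d : Fin t → ℤ)
    (hrel : (∑ i, c i • yold i) + (∑ j, d j • ynew j) = 0) :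
    ∀ j j' : Fin t, d j = d j' :=
  last_coeffs_equal_general t r m yold ynew hyold hynew c d hrel
end

section
/- From Example 2.3 and Proposition 2.2 it follows that the Graver complexity of A_{3,4} (incidence matrix of K_{3,4}) satisfies g(A_{3,4}) ≥ 27. -/
set_option linter.unusedVariables false

/-- The incidence matrix `A_{t,r}` of the complete bipartite graph `K_{t,r}`. -/
def incidence (t r : ℕ) : Matrix (Fin t ⊕ Fin r) (Fin t × Fin r) ℤ :=
  fun row e =>
    match row with
    | Sum.inl a => if a = e.1 then 1 else 0
    | Sum.inr b => if b = e.2 then 1 else 0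

/-! ### The seven circuits and the block assignment -/

def X7 : Fin 7 → Fin 3 × Fin 4 → ℤ := fun k p =>
  ![!![1,0,-1,0; 0,0,1,-1; -1,0,0,1],
    !![0,-1,0,1; 0,1,-1,0; 0,0,1,-1],
    !![1,0,0,-1; -1,1,0,0; 0,-1,0,1],
    !![1,-1,0,0; -1,0,0,1; 0,1,0,-1],
    !![0,1,-1,0; 0,-1,0,1; 0,0,1,-1],
    !![0,0,1,-1; 1,0,-1,0; -1,0,0,1],
    !![-1,0,0,1; 0,0,1,-1; 1,0,-1,0]] k p.1 p.2

def sg : Fin 27 → Fin 7 := fun i =>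
  if i.val < 1 then 0 else if i.val < 3 then 1 else if i.val < 6 then 2
  else if i.val < 9 then 3 else if i.val < 14 then 4 else if i.val < 20 then 5 else 6

def Z : Fin 27 × (Fin 3 × Fin 4) → ℤ := fun p => X7 (sg p.1) p.2

lemma Xbnd : ∀ (k : Fin 7) (p : Fin 3 × Fin 4), |X7 k p| ≤ 1 := by decide

lemma memP (a b : ℤ) (h1 : |a| ≤ |b|) (h2 : 0 ≤ a * b) (hb : b = 1) : 0 ≤ a ∧ a ≤ 1 := by
  subst hb
  rw [mul_one] at h2
  rw [abs_one] at h1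
  have := abs_le.mp h1
  omega

lemma memN (a b : ℤ) (h1 : |a| ≤ |b|) (h2 : 0 ≤ a * b) (hb : b = -1) : -1 ≤ a ∧ a ≤ 0 := by
  subst hb
  rw [mul_neg_one, neg_nonneg] at h2
  rw [abs_neg, abs_one] at h1
  have := abs_le.mp h1
  omega

lemma memZ (a b : ℤ) (h1 : |a| ≤ |b|) (h2 : 0 ≤ a * b) (hb : b = 0) : a = 0 := by
  subst hb
  simpa using h1

lemma enumP : ∀ p : Fin 3 × Fin 4,
    p = (0,0) ∨ p = (0,1) ∨ p = (0,2) ∨ p = (0,3) ∨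
    p = (1,0) ∨ p = (1,1) ∨ p = (1,2) ∨ p = (1,3) ∨
    p = (2,0) ∨ p = (2,1) ∨ p = (2,2) ∨ p = (2,3) := by decide

/-! ### Extracting equations from kernel membership -/

lemma blocks_ker {y : Fin 27 × (Fin 3 × Fin 4) → ℤ}
    (h : (lawrence (incidence 3 4) 27).mulVec y = 0) (i : Fin 27) :
    (incidence 3 4).mulVec (fun b => y (i, b)) = 0 := by
  funext a
  have h1 := congrFun h (Sum.inl (i, a))
  simpa [lawrence, Matrix.mulVec, dotProduct, Fintype.sum_prod_type,
    ite_mul, zero_mul, Finset.sum_ite_eq] using h1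

lemma cols_ker {y : Fin 27 × (Fin 3 × Fin 4) → ℤ}
    (h : (lawrence (incidence 3 4) 27).mulVec y = 0) (b : Fin 3 × Fin 4) :
    ∑ i : Fin 27, y (i, b) = 0 := by
  have h1 := congrFun h (Sum.inr b)
  simpa [lawrence, Matrix.mulVec, dotProduct, Fintype.sum_prod_type,
    ite_mul, zero_mul, one_mul, Finset.sum_ite_eq] using h1

lemma margins (w : Fin 3 × Fin 4 → ℤ) (hker : (incidence 3 4).mulVec w = 0) :
    (w (0,0) + w (0,1) + w (0,2) + w (0,3) = 0) ∧
    (w (1,0) + w (1,1) + w (1,2) + w (1,3) = 0) ∧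
    (w (2,0) + w (2,1) + w (2,2) + w (2,3) = 0) ∧
    (w (0,0) + w (1,0) + w (2,0) = 0) ∧
    (w (0,1) + w (1,1) + w (2,1) = 0) ∧
    (w (0,2) + w (1,2) + w (2,2) = 0) ∧
    (w (0,3) + w (1,3) + w (2,3) = 0) := by
  have r0 := congrFun hker (Sum.inl 0)
  have r1 := congrFun hker (Sum.inl 1)
  have r2 := congrFun hker (Sum.inl 2)
  have s0 := congrFun hker (Sum.inr 0)
  have s1 := congrFun hker (Sum.inr 1)
  have s2 := congrFun hker (Sum.inr 2)
  have s3 := congrFun hker (Sum.inr 3)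
  simp only [incidence, Matrix.mulVec, dotProduct, Fintype.sum_prod_type,
    Fin.sum_univ_three, Fin.sum_univ_four, Pi.zero_apply] at r0 r1 r2 s0 s1 s2 s3
  norm_num [-Prod.mk_zero_zero, -Prod.mk_one_one] at r0 r1 r2 s0 s1 s2 s3
  refine ⟨by omega, by omega, by omega, by omega, by omega, by omega, by omega⟩

lemma key0 (w00 w01 w02 w03 w10 w11 w12 w13 w20 w21 w22 w23 : ℤ)
    (b00 : 0 ≤ w00 ∧ w00 ≤ 1) (b01 : w01 = 0) (b02 : -1 ≤ w02 ∧ w02 ≤ 0)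
    (b03 : w03 = 0) (b10 : w10 = 0) (b11 : w11 = 0)
    (b12 : 0 ≤ w12 ∧ w12 ≤ 1) (b13 : -1 ≤ w13 ∧ w13 ≤ 0) (b20 : -1 ≤ w20 ∧ w20 ≤ 0)
    (b21 : w21 = 0) (b22 : w22 = 0) (b23 : 0 ≤ w23 ∧ w23 ≤ 1)
    (m0 : w00 + w01 + w02 + w03 = 0) (m1 : w10 + w11 + w12 + w13 = 0) (m2 : w20 + w21 + w22 + w23 = 0)
    (n0 : w00 + w10 + w20 = 0) (n1 : w01 + w11 + w21 = 0) (n2 : w02 + w12 + w22 = 0)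
    (n3 : w03 + w13 + w23 = 0) :
    (w00 = 0 ∧ w01 = 0 ∧ w02 = 0 ∧ w03 = 0 ∧ w10 = 0 ∧ w11 = 0 ∧ w12 = 0 ∧ w13 = 0 ∧ w20 = 0 ∧ w21 = 0 ∧ w22 = 0 ∧ w23 = 0) ∨ (w00 = 1 ∧ w01 = 0 ∧ w02 = -1 ∧ w03 = 0 ∧ w10 = 0 ∧ w11 = 0 ∧ w12 = 1 ∧ w13 = -1 ∧ w20 = -1 ∧ w21 = 0 ∧ w22 = 0 ∧ w23 = 1) := by omega

lemma circ0 (w : Fin 3 × Fin 4 → ℤ) (hker : (incidence 3 4).mulVec w = 0)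
    (hs : sqle w (X7 0)) : w = 0 ∨ w = X7 0 := by
  obtain ⟨m0, m1, m2, m3, m4, m5, m6⟩ := margins w hker
  have b00 := memP _ _ (hs ((0:Fin 3),(0:Fin 4))).1 (hs ((0:Fin 3),(0:Fin 4))).2 (show X7 0 ((0:Fin 3),(0:Fin 4)) = 1 from by decide)
  have b01 := memZ _ _ (hs ((0:Fin 3),(1:Fin 4))).1 (hs ((0:Fin 3),(1:Fin 4))).2 (show X7 0 ((0:Fin 3),(1:Fin 4)) = 0 from by decide)
  have b02 := memN _ _ (hs ((0:Fin 3),(2:Fin 4))).1 (hs ((0:Fin 3),(2:Fin 4))).2 (show X7 0 ((0:Fin 3),(2:Fin 4)) = -1 from by decide)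
  have b03 := memZ _ _ (hs ((0:Fin 3),(3:Fin 4))).1 (hs ((0:Fin 3),(3:Fin 4))).2 (show X7 0 ((0:Fin 3),(3:Fin 4)) = 0 from by decide)
  have b10 := memZ _ _ (hs ((1:Fin 3),(0:Fin 4))).1 (hs ((1:Fin 3),(0:Fin 4))).2 (show X7 0 ((1:Fin 3),(0:Fin 4)) = 0 from by decide)
  have b11 := memZ _ _ (hs ((1:Fin 3),(1:Fin 4))).1 (hs ((1:Fin 3),(1:Fin 4))).2 (show X7 0 ((1:Fin 3),(1:Fin 4)) = 0 from by decide)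
  have b12 := memP _ _ (hs ((1:Fin 3),(2:Fin 4))).1 (hs ((1:Fin 3),(2:Fin 4))).2 (show X7 0 ((1:Fin 3),(2:Fin 4)) = 1 from by decide)
  have b13 := memN _ _ (hs ((1:Fin 3),(3:Fin 4))).1 (hs ((1:Fin 3),(3:Fin 4))).2 (show X7 0 ((1:Fin 3),(3:Fin 4)) = -1 from by decide)
  have b20 := memN _ _ (hs ((2:Fin 3),(0:Fin 4))).1 (hs ((2:Fin 3),(0:Fin 4))).2 (show X7 0 ((2:Fin 3),(0:Fin 4)) = -1 from by decide)
  have b21 := memZ _ _ (hs ((2:Fin 3),(1:Fin 4))).1 (hs ((2:Fin 3),(1:Fin 4))).2 (show X7 0 ((2:Fin 3),(1:Fin 4)) = 0 from by decide)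
  have b22 := memZ _ _ (hs ((2:Fin 3),(2:Fin 4))).1 (hs ((2:Fin 3),(2:Fin 4))).2 (show X7 0 ((2:Fin 3),(2:Fin 4)) = 0 from by decide)
  have b23 := memP _ _ (hs ((2:Fin 3),(3:Fin 4))).1 (hs ((2:Fin 3),(3:Fin 4))).2 (show X7 0 ((2:Fin 3),(3:Fin 4)) = 1 from by decide)
  have key := key0 (w (0,0)) (w (0,1)) (w (0,2)) (w (0,3)) (w (1,0)) (w (1,1)) (w (1,2)) (w (1,3)) (w (2,0)) (w (2,1)) (w (2,2)) (w (2,3)) b00 b01 b02 b03 b10 b11 b12 b13 b20 b21 b22 b23 m0 m1 m2 m3 m4 m5 m6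
  rcases key with ⟨e0, e1, e2, e3, e4, e5, e6, e7, e8, e9, e10, e11⟩ | ⟨e0, e1, e2, e3, e4, e5, e6, e7, e8, e9, e10, e11⟩
  · left
    funext p
    rcases enumP p with rfl|rfl|rfl|rfl|rfl|rfl|rfl|rfl|rfl|rfl|rfl|rfl
    exacts [e0, e1, e2, e3, e4, e5, e6, e7, e8, e9, e10, e11]
  · right
    funext p
    rcases enumP p with rfl|rfl|rfl|rfl|rfl|rfl|rfl|rfl|rfl|rfl|rfl|rfl
    exacts [e0.trans (by decide), e1.trans (by decide), e2.trans (by decide), e3.trans (by decide), e4.trans (by decide), e5.trans (by decide), e6.trans (by decide), e7.trans (by decide), e8.trans (by decide), e9.trans (by decide), e10.trans (by decide), e11.trans (by decide)]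

lemma key1 (w00 w01 w02 w03 w10 w11 w12 w13 w20 w21 w22 w23 : ℤ)
    (b00 : w00 = 0) (b01 : -1 ≤ w01 ∧ w01 ≤ 0) (b02 : w02 = 0)
    (b03 : 0 ≤ w03 ∧ w03 ≤ 1) (b10 : w10 = 0) (b11 : 0 ≤ w11 ∧ w11 ≤ 1)
    (b12 : -1 ≤ w12 ∧ w12 ≤ 0) (b13 : w13 = 0) (b20 : w20 = 0)
    (b21 : w21 = 0) (b22 : 0 ≤ w22 ∧ w22 ≤ 1) (b23 : -1 ≤ w23 ∧ w23 ≤ 0)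
    (m0 : w00 + w01 + w02 + w03 = 0) (m1 : w10 + w11 + w12 + w13 = 0) (m2 : w20 + w21 + w22 + w23 = 0)
    (n0 : w00 + w10 + w20 = 0) (n1 : w01 + w11 + w21 = 0) (n2 : w02 + w12 + w22 = 0)
    (n3 : w03 + w13 + w23 = 0) :
    (w00 = 0 ∧ w01 = 0 ∧ w02 = 0 ∧ w03 = 0 ∧ w10 = 0 ∧ w11 = 0 ∧ w12 = 0 ∧ w13 = 0 ∧ w20 = 0 ∧ w21 = 0 ∧ w22 = 0 ∧ w23 = 0) ∨ (w00 = 0 ∧ w01 = -1 ∧ w02 = 0 ∧ w03 = 1 ∧ w10 = 0 ∧ w11 = 1 ∧ w12 = -1 ∧ w13 = 0 ∧ w20 = 0 ∧ w21 = 0 ∧ w22 = 1 ∧ w23 = -1) := by omega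

lemma circ1 (w : Fin 3 × Fin 4 → ℤ) (hker : (incidence 3 4).mulVec w = 0)
    (hs : sqle w (X7 1)) : w = 0 ∨ w = X7 1 := by
  obtain ⟨m0, m1, m2, m3, m4, m5, m6⟩ := margins w hker
  have b00 := memZ _ _ (hs ((0:Fin 3),(0:Fin 4))).1 (hs ((0:Fin 3),(0:Fin 4))).2 (show X7 1 ((0:Fin 3),(0:Fin 4)) = 0 from by decide)
  have b01 := memN _ _ (hs ((0:Fin 3),(1:Fin 4))).1 (hs ((0:Fin 3),(1:Fin 4))).2 (show X7 1 ((0:Fin 3),(1:Fin 4)) = -1 from by decide)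
  have b02 := memZ _ _ (hs ((0:Fin 3),(2:Fin 4))).1 (hs ((0:Fin 3),(2:Fin 4))).2 (show X7 1 ((0:Fin 3),(2:Fin 4)) = 0 from by decide)
  have b03 := memP _ _ (hs ((0:Fin 3),(3:Fin 4))).1 (hs ((0:Fin 3),(3:Fin 4))).2 (show X7 1 ((0:Fin 3),(3:Fin 4)) = 1 from by decide)
  have b10 := memZ _ _ (hs ((1:Fin 3),(0:Fin 4))).1 (hs ((1:Fin 3),(0:Fin 4))).2 (show X7 1 ((1:Fin 3),(0:Fin 4)) = 0 from by decide)
  have b11 := memP _ _ (hs ((1:Fin 3),(1:Fin 4))).1 (hs ((1:Fin 3),(1:Fin 4))).2 (show X7 1 ((1:Fin 3),(1:Fin 4)) = 1 from by decide)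
  have b12 := memN _ _ (hs ((1:Fin 3),(2:Fin 4))).1 (hs ((1:Fin 3),(2:Fin 4))).2 (show X7 1 ((1:Fin 3),(2:Fin 4)) = -1 from by decide)
  have b13 := memZ _ _ (hs ((1:Fin 3),(3:Fin 4))).1 (hs ((1:Fin 3),(3:Fin 4))).2 (show X7 1 ((1:Fin 3),(3:Fin 4)) = 0 from by decide)
  have b20 := memZ _ _ (hs ((2:Fin 3),(0:Fin 4))).1 (hs ((2:Fin 3),(0:Fin 4))).2 (show X7 1 ((2:Fin 3),(0:Fin 4)) = 0 from by decide)
  have b21 := memZ _ _ (hs ((2:Fin 3),(1:Fin 4))).1 (hs ((2:Fin 3),(1:Fin 4))).2 (show X7 1 ((2:Fin 3),(1:Fin 4)) = 0 from by decide)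
  have b22 := memP _ _ (hs ((2:Fin 3),(2:Fin 4))).1 (hs ((2:Fin 3),(2:Fin 4))).2 (show X7 1 ((2:Fin 3),(2:Fin 4)) = 1 from by decide)
  have b23 := memN _ _ (hs ((2:Fin 3),(3:Fin 4))).1 (hs ((2:Fin 3),(3:Fin 4))).2 (show X7 1 ((2:Fin 3),(3:Fin 4)) = -1 from by decide)
  have key := key1 (w (0,0)) (w (0,1)) (w (0,2)) (w (0,3)) (w (1,0)) (w (1,1)) (w (1,2)) (w (1,3)) (w (2,0)) (w (2,1)) (w (2,2)) (w (2,3)) b00 b01 b02 b03 b10 b11 b12 b13 b20 b21 b22 b23 m0 m1 m2 m3 m4 m5 m6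
  rcases key with ⟨e0, e1, e2, e3, e4, e5, e6, e7, e8, e9, e10, e11⟩ | ⟨e0, e1, e2, e3, e4, e5, e6, e7, e8, e9, e10, e11⟩
  · left
    funext p
    rcases enumP p with rfl|rfl|rfl|rfl|rfl|rfl|rfl|rfl|rfl|rfl|rfl|rfl
    exacts [e0, e1, e2, e3, e4, e5, e6, e7, e8, e9, e10, e11]
  · right
    funext p
    rcases enumP p with rfl|rfl|rfl|rfl|rfl|rfl|rfl|rfl|rfl|rfl|rfl|rfl
    exacts [e0.trans (by decide), e1.trans (by decide), e2.trans (by decide), e3.trans (by decide), e4.trans (by decide), e5.trans (by decide), e6.trans (by decide), e7.trans (by decide), e8.trans (by decide), e9.trans (by decide), e10.trans (by decide), e11.trans (by decide)]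

lemma key2 (w00 w01 w02 w03 w10 w11 w12 w13 w20 w21 w22 w23 : ℤ)
    (b00 : 0 ≤ w00 ∧ w00 ≤ 1) (b01 : w01 = 0) (b02 : w02 = 0)
    (b03 : -1 ≤ w03 ∧ w03 ≤ 0) (b10 : -1 ≤ w10 ∧ w10 ≤ 0) (b11 : 0 ≤ w11 ∧ w11 ≤ 1)
    (b12 : w12 = 0) (b13 : w13 = 0) (b20 : w20 = 0)
    (b21 : -1 ≤ w21 ∧ w21 ≤ 0) (b22 : w22 = 0) (b23 : 0 ≤ w23 ∧ w23 ≤ 1)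
    (m0 : w00 + w01 + w02 + w03 = 0) (m1 : w10 + w11 + w12 + w13 = 0) (m2 : w20 + w21 + w22 + w23 = 0)
    (n0 : w00 + w10 + w20 = 0) (n1 : w01 + w11 + w21 = 0) (n2 : w02 + w12 + w22 = 0)
    (n3 : w03 + w13 + w23 = 0) :
    (w00 = 0 ∧ w01 = 0 ∧ w02 = 0 ∧ w03 = 0 ∧ w10 = 0 ∧ w11 = 0 ∧ w12 = 0 ∧ w13 = 0 ∧ w20 = 0 ∧ w21 = 0 ∧ w22 = 0 ∧ w23 = 0) ∨ (w00 = 1 ∧ w01 = 0 ∧ w02 = 0 ∧ w03 = -1 ∧ w10 = -1 ∧ w11 = 1 ∧ w12 = 0 ∧ w13 = 0 ∧ w20 = 0 ∧ w21 = -1 ∧ w22 = 0 ∧ w23 = 1) := by omega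

lemma circ2 (w : Fin 3 × Fin 4 → ℤ) (hker : (incidence 3 4).mulVec w = 0)
    (hs : sqle w (X7 2)) : w = 0 ∨ w = X7 2 := by
  obtain ⟨m0, m1, m2, m3, m4, m5, m6⟩ := margins w hker
  have b00 := memP _ _ (hs ((0:Fin 3),(0:Fin 4))).1 (hs ((0:Fin 3),(0:Fin 4))).2 (show X7 2 ((0:Fin 3),(0:Fin 4)) = 1 from by decide)
  have b01 := memZ _ _ (hs ((0:Fin 3),(1:Fin 4))).1 (hs ((0:Fin 3),(1:Fin 4))).2 (show X7 2 ((0:Fin 3),(1:Fin 4)) = 0 from by decide)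
  have b02 := memZ _ _ (hs ((0:Fin 3),(2:Fin 4))).1 (hs ((0:Fin 3),(2:Fin 4))).2 (show X7 2 ((0:Fin 3),(2:Fin 4)) = 0 from by decide)
  have b03 := memN _ _ (hs ((0:Fin 3),(3:Fin 4))).1 (hs ((0:Fin 3),(3:Fin 4))).2 (show X7 2 ((0:Fin 3),(3:Fin 4)) = -1 from by decide)
  have b10 := memN _ _ (hs ((1:Fin 3),(0:Fin 4))).1 (hs ((1:Fin 3),(0:Fin 4))).2 (show X7 2 ((1:Fin 3),(0:Fin 4)) = -1 from by decide)
  have b11 := memP _ _ (hs ((1:Fin 3),(1:Fin 4))).1 (hs ((1:Fin 3),(1:Fin 4))).2 (show X7 2 ((1:Fin 3),(1:Fin 4)) = 1 from by decide)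
  have b12 := memZ _ _ (hs ((1:Fin 3),(2:Fin 4))).1 (hs ((1:Fin 3),(2:Fin 4))).2 (show X7 2 ((1:Fin 3),(2:Fin 4)) = 0 from by decide)
  have b13 := memZ _ _ (hs ((1:Fin 3),(3:Fin 4))).1 (hs ((1:Fin 3),(3:Fin 4))).2 (show X7 2 ((1:Fin 3),(3:Fin 4)) = 0 from by decide)
  have b20 := memZ _ _ (hs ((2:Fin 3),(0:Fin 4))).1 (hs ((2:Fin 3),(0:Fin 4))).2 (show X7 2 ((2:Fin 3),(0:Fin 4)) = 0 from by decide)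
  have b21 := memN _ _ (hs ((2:Fin 3),(1:Fin 4))).1 (hs ((2:Fin 3),(1:Fin 4))).2 (show X7 2 ((2:Fin 3),(1:Fin 4)) = -1 from by decide)
  have b22 := memZ _ _ (hs ((2:Fin 3),(2:Fin 4))).1 (hs ((2:Fin 3),(2:Fin 4))).2 (show X7 2 ((2:Fin 3),(2:Fin 4)) = 0 from by decide)
  have b23 := memP _ _ (hs ((2:Fin 3),(3:Fin 4))).1 (hs ((2:Fin 3),(3:Fin 4))).2 (show X7 2 ((2:Fin 3),(3:Fin 4)) = 1 from by decide)
  have key := key2 (w (0,0)) (w (0,1)) (w (0,2)) (w (0,3)) (w (1,0)) (w (1,1)) (w (1,2)) (w (1,3)) (w (2,0)) (w (2,1)) (w (2,2)) (w (2,3)) b00 b01 b02 b03 b10 b11 b12 b13 b20 b21 b22 b23 m0 m1 m2 m3 m4 m5 m6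
  rcases key with ⟨e0, e1, e2, e3, e4, e5, e6, e7, e8, e9, e10, e11⟩ | ⟨e0, e1, e2, e3, e4, e5, e6, e7, e8, e9, e10, e11⟩
  · left
    funext p
    rcases enumP p with rfl|rfl|rfl|rfl|rfl|rfl|rfl|rfl|rfl|rfl|rfl|rfl
    exacts [e0, e1, e2, e3, e4, e5, e6, e7, e8, e9, e10, e11]
  · right
    funext p
    rcases enumP p with rfl|rfl|rfl|rfl|rfl|rfl|rfl|rfl|rfl|rfl|rfl|rfl
    exacts [e0.trans (by decide), e1.trans (by decide), e2.trans (by decide), e3.trans (by decide), e4.trans (by decide), e5.trans (by decide), e6.trans (by decide), e7.trans (by decide), e8.trans (by decide), e9.trans (by decide), e10.trans (by decide), e11.trans (by decide)]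

lemma key3 (w00 w01 w02 w03 w10 w11 w12 w13 w20 w21 w22 w23 : ℤ)
    (b00 : 0 ≤ w00 ∧ w00 ≤ 1) (b01 : -1 ≤ w01 ∧ w01 ≤ 0) (b02 : w02 = 0)
    (b03 : w03 = 0) (b10 : -1 ≤ w10 ∧ w10 ≤ 0) (b11 : w11 = 0)
    (b12 : w12 = 0) (b13 : 0 ≤ w13 ∧ w13 ≤ 1) (b20 : w20 = 0)
    (b21 : 0 ≤ w21 ∧ w21 ≤ 1) (b22 : w22 = 0) (b23 : -1 ≤ w23 ∧ w23 ≤ 0)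
    (m0 : w00 + w01 + w02 + w03 = 0) (m1 : w10 + w11 + w12 + w13 = 0) (m2 : w20 + w21 + w22 + w23 = 0)
    (n0 : w00 + w10 + w20 = 0) (n1 : w01 + w11 + w21 = 0) (n2 : w02 + w12 + w22 = 0)
    (n3 : w03 + w13 + w23 = 0) :
    (w00 = 0 ∧ w01 = 0 ∧ w02 = 0 ∧ w03 = 0 ∧ w10 = 0 ∧ w11 = 0 ∧ w12 = 0 ∧ w13 = 0 ∧ w20 = 0 ∧ w21 = 0 ∧ w22 = 0 ∧ w23 = 0) ∨ (w00 = 1 ∧ w01 = -1 ∧ w02 = 0 ∧ w03 = 0 ∧ w10 = -1 ∧ w11 = 0 ∧ w12 = 0 ∧ w13 = 1 ∧ w20 = 0 ∧ w21 = 1 ∧ w22 = 0 ∧ w23 = -1) := by omega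

lemma circ3 (w : Fin 3 × Fin 4 → ℤ) (hker : (incidence 3 4).mulVec w = 0)
    (hs : sqle w (X7 3)) : w = 0 ∨ w = X7 3 := by
  obtain ⟨m0, m1, m2, m3, m4, m5, m6⟩ := margins w hker
  have b00 := memP _ _ (hs ((0:Fin 3),(0:Fin 4))).1 (hs ((0:Fin 3),(0:Fin 4))).2 (show X7 3 ((0:Fin 3),(0:Fin 4)) = 1 from by decide)
  have b01 := memN _ _ (hs ((0:Fin 3),(1:Fin 4))).1 (hs ((0:Fin 3),(1:Fin 4))).2 (show X7 3 ((0:Fin 3),(1:Fin 4)) = -1 from by decide)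
  have b02 := memZ _ _ (hs ((0:Fin 3),(2:Fin 4))).1 (hs ((0:Fin 3),(2:Fin 4))).2 (show X7 3 ((0:Fin 3),(2:Fin 4)) = 0 from by decide)
  have b03 := memZ _ _ (hs ((0:Fin 3),(3:Fin 4))).1 (hs ((0:Fin 3),(3:Fin 4))).2 (show X7 3 ((0:Fin 3),(3:Fin 4)) = 0 from by decide)
  have b10 := memN _ _ (hs ((1:Fin 3),(0:Fin 4))).1 (hs ((1:Fin 3),(0:Fin 4))).2 (show X7 3 ((1:Fin 3),(0:Fin 4)) = -1 from by decide)
  have b11 := memZ _ _ (hs ((1:Fin 3),(1:Fin 4))).1 (hs ((1:Fin 3),(1:Fin 4))).2 (show X7 3 ((1:Fin 3),(1:Fin 4)) = 0 from by decide)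
  have b12 := memZ _ _ (hs ((1:Fin 3),(2:Fin 4))).1 (hs ((1:Fin 3),(2:Fin 4))).2 (show X7 3 ((1:Fin 3),(2:Fin 4)) = 0 from by decide)
  have b13 := memP _ _ (hs ((1:Fin 3),(3:Fin 4))).1 (hs ((1:Fin 3),(3:Fin 4))).2 (show X7 3 ((1:Fin 3),(3:Fin 4)) = 1 from by decide)
  have b20 := memZ _ _ (hs ((2:Fin 3),(0:Fin 4))).1 (hs ((2:Fin 3),(0:Fin 4))).2 (show X7 3 ((2:Fin 3),(0:Fin 4)) = 0 from by decide)
  have b21 := memP _ _ (hs ((2:Fin 3),(1:Fin 4))).1 (hs ((2:Fin 3),(1:Fin 4))).2 (show X7 3 ((2:Fin 3),(1:Fin 4)) = 1 from by decide)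
  have b22 := memZ _ _ (hs ((2:Fin 3),(2:Fin 4))).1 (hs ((2:Fin 3),(2:Fin 4))).2 (show X7 3 ((2:Fin 3),(2:Fin 4)) = 0 from by decide)
  have b23 := memN _ _ (hs ((2:Fin 3),(3:Fin 4))).1 (hs ((2:Fin 3),(3:Fin 4))).2 (show X7 3 ((2:Fin 3),(3:Fin 4)) = -1 from by decide)
  have key := key3 (w (0,0)) (w (0,1)) (w (0,2)) (w (0,3)) (w (1,0)) (w (1,1)) (w (1,2)) (w (1,3)) (w (2,0)) (w (2,1)) (w (2,2)) (w (2,3)) b00 b01 b02 b03 b10 b11 b12 b13 b20 b21 b22 b23 m0 m1 m2 m3 m4 m5 m6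
  rcases key with ⟨e0, e1, e2, e3, e4, e5, e6, e7, e8, e9, e10, e11⟩ | ⟨e0, e1, e2, e3, e4, e5, e6, e7, e8, e9, e10, e11⟩
  · left
    funext p
    rcases enumP p with rfl|rfl|rfl|rfl|rfl|rfl|rfl|rfl|rfl|rfl|rfl|rfl
    exacts [e0, e1, e2, e3, e4, e5, e6, e7, e8, e9, e10, e11]
  · right
    funext p
    rcases enumP p with rfl|rfl|rfl|rfl|rfl|rfl|rfl|rfl|rfl|rfl|rfl|rfl
    exacts [e0.trans (by decide), e1.trans (by decide), e2.trans (by decide), e3.trans (by decide), e4.trans (by decide), e5.trans (by decide), e6.trans (by decide), e7.trans (by decide), e8.trans (by decide), e9.trans (by decide), e10.trans (by decide), e11.trans (by decide)]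

lemma key4 (w00 w01 w02 w03 w10 w11 w12 w13 w20 w21 w22 w23 : ℤ)
    (b00 : w00 = 0) (b01 : 0 ≤ w01 ∧ w01 ≤ 1) (b02 : -1 ≤ w02 ∧ w02 ≤ 0)
    (b03 : w03 = 0) (b10 : w10 = 0) (b11 : -1 ≤ w11 ∧ w11 ≤ 0)
    (b12 : w12 = 0) (b13 : 0 ≤ w13 ∧ w13 ≤ 1) (b20 : w20 = 0)
    (b21 : w21 = 0) (b22 : 0 ≤ w22 ∧ w22 ≤ 1) (b23 : -1 ≤ w23 ∧ w23 ≤ 0)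
    (m0 : w00 + w01 + w02 + w03 = 0) (m1 : w10 + w11 + w12 + w13 = 0) (m2 : w20 + w21 + w22 + w23 = 0)
    (n0 : w00 + w10 + w20 = 0) (n1 : w01 + w11 + w21 = 0) (n2 : w02 + w12 + w22 = 0)
    (n3 : w03 + w13 + w23 = 0) :
    (w00 = 0 ∧ w01 = 0 ∧ w02 = 0 ∧ w03 = 0 ∧ w10 = 0 ∧ w11 = 0 ∧ w12 = 0 ∧ w13 = 0 ∧ w20 = 0 ∧ w21 = 0 ∧ w22 = 0 ∧ w23 = 0) ∨ (w00 = 0 ∧ w01 = 1 ∧ w02 = -1 ∧ w03 = 0 ∧ w10 = 0 ∧ w11 = -1 ∧ w12 = 0 ∧ w13 = 1 ∧ w20 = 0 ∧ w21 = 0 ∧ w22 = 1 ∧ w23 = -1) := by omega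

lemma circ4 (w : Fin 3 × Fin 4 → ℤ) (hker : (incidence 3 4).mulVec w = 0)
    (hs : sqle w (X7 4)) : w = 0 ∨ w = X7 4 := by
  obtain ⟨m0, m1, m2, m3, m4, m5, m6⟩ := margins w hker
  have b00 := memZ _ _ (hs ((0:Fin 3),(0:Fin 4))).1 (hs ((0:Fin 3),(0:Fin 4))).2 (show X7 4 ((0:Fin 3),(0:Fin 4)) = 0 from by decide)
  have b01 := memP _ _ (hs ((0:Fin 3),(1:Fin 4))).1 (hs ((0:Fin 3),(1:Fin 4))).2 (show X7 4 ((0:Fin 3),(1:Fin 4)) = 1 from by decide)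
  have b02 := memN _ _ (hs ((0:Fin 3),(2:Fin 4))).1 (hs ((0:Fin 3),(2:Fin 4))).2 (show X7 4 ((0:Fin 3),(2:Fin 4)) = -1 from by decide)
  have b03 := memZ _ _ (hs ((0:Fin 3),(3:Fin 4))).1 (hs ((0:Fin 3),(3:Fin 4))).2 (show X7 4 ((0:Fin 3),(3:Fin 4)) = 0 from by decide)
  have b10 := memZ _ _ (hs ((1:Fin 3),(0:Fin 4))).1 (hs ((1:Fin 3),(0:Fin 4))).2 (show X7 4 ((1:Fin 3),(0:Fin 4)) = 0 from by decide)
  have b11 := memN _ _ (hs ((1:Fin 3),(1:Fin 4))).1 (hs ((1:Fin 3),(1:Fin 4))).2 (show X7 4 ((1:Fin 3),(1:Fin 4)) = -1 from by decide)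
  have b12 := memZ _ _ (hs ((1:Fin 3),(2:Fin 4))).1 (hs ((1:Fin 3),(2:Fin 4))).2 (show X7 4 ((1:Fin 3),(2:Fin 4)) = 0 from by decide)
  have b13 := memP _ _ (hs ((1:Fin 3),(3:Fin 4))).1 (hs ((1:Fin 3),(3:Fin 4))).2 (show X7 4 ((1:Fin 3),(3:Fin 4)) = 1 from by decide)
  have b20 := memZ _ _ (hs ((2:Fin 3),(0:Fin 4))).1 (hs ((2:Fin 3),(0:Fin 4))).2 (show X7 4 ((2:Fin 3),(0:Fin 4)) = 0 from by decide)
  have b21 := memZ _ _ (hs ((2:Fin 3),(1:Fin 4))).1 (hs ((2:Fin 3),(1:Fin 4))).2 (show X7 4 ((2:Fin 3),(1:Fin 4)) = 0 from by decide)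
  have b22 := memP _ _ (hs ((2:Fin 3),(2:Fin 4))).1 (hs ((2:Fin 3),(2:Fin 4))).2 (show X7 4 ((2:Fin 3),(2:Fin 4)) = 1 from by decide)
  have b23 := memN _ _ (hs ((2:Fin 3),(3:Fin 4))).1 (hs ((2:Fin 3),(3:Fin 4))).2 (show X7 4 ((2:Fin 3),(3:Fin 4)) = -1 from by decide)
  have key := key4 (w (0,0)) (w (0,1)) (w (0,2)) (w (0,3)) (w (1,0)) (w (1,1)) (w (1,2)) (w (1,3)) (w (2,0)) (w (2,1)) (w (2,2)) (w (2,3)) b00 b01 b02 b03 b10 b11 b12 b13 b20 b21 b22 b23 m0 m1 m2 m3 m4 m5 m6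
  rcases key with ⟨e0, e1, e2, e3, e4, e5, e6, e7, e8, e9, e10, e11⟩ | ⟨e0, e1, e2, e3, e4, e5, e6, e7, e8, e9, e10, e11⟩
  · left
    funext p
    rcases enumP p with rfl|rfl|rfl|rfl|rfl|rfl|rfl|rfl|rfl|rfl|rfl|rfl
    exacts [e0, e1, e2, e3, e4, e5, e6, e7, e8, e9, e10, e11]
  · right
    funext p
    rcases enumP p with rfl|rfl|rfl|rfl|rfl|rfl|rfl|rfl|rfl|rfl|rfl|rfl
    exacts [e0.trans (by decide), e1.trans (by decide), e2.trans (by decide), e3.trans (by decide), e4.trans (by decide), e5.trans (by decide), e6.trans (by decide), e7.trans (by decide), e8.trans (by decide), e9.trans (by decide), e10.trans (by decide), e11.trans (by decide)]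

lemma key5 (w00 w01 w02 w03 w10 w11 w12 w13 w20 w21 w22 w23 : ℤ)
    (b00 : w00 = 0) (b01 : w01 = 0) (b02 : 0 ≤ w02 ∧ w02 ≤ 1)
    (b03 : -1 ≤ w03 ∧ w03 ≤ 0) (b10 : 0 ≤ w10 ∧ w10 ≤ 1) (b11 : w11 = 0)
    (b12 : -1 ≤ w12 ∧ w12 ≤ 0) (b13 : w13 = 0) (b20 : -1 ≤ w20 ∧ w20 ≤ 0)
    (b21 : w21 = 0) (b22 : w22 = 0) (b23 : 0 ≤ w23 ∧ w23 ≤ 1)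
    (m0 : w00 + w01 + w02 + w03 = 0) (m1 : w10 + w11 + w12 + w13 = 0) (m2 : w20 + w21 + w22 + w23 = 0)
    (n0 : w00 + w10 + w20 = 0) (n1 : w01 + w11 + w21 = 0) (n2 : w02 + w12 + w22 = 0)
    (n3 : w03 + w13 + w23 = 0) :
    (w00 = 0 ∧ w01 = 0 ∧ w02 = 0 ∧ w03 = 0 ∧ w10 = 0 ∧ w11 = 0 ∧ w12 = 0 ∧ w13 = 0 ∧ w20 = 0 ∧ w21 = 0 ∧ w22 = 0 ∧ w23 = 0) ∨ (w00 = 0 ∧ w01 = 0 ∧ w02 = 1 ∧ w03 = -1 ∧ w10 = 1 ∧ w11 = 0 ∧ w12 = -1 ∧ w13 = 0 ∧ w20 = -1 ∧ w21 = 0 ∧ w22 = 0 ∧ w23 = 1) := by omega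

lemma circ5 (w : Fin 3 × Fin 4 → ℤ) (hker : (incidence 3 4).mulVec w = 0)
    (hs : sqle w (X7 5)) : w = 0 ∨ w = X7 5 := by
  obtain ⟨m0, m1, m2, m3, m4, m5, m6⟩ := margins w hker
  have b00 := memZ _ _ (hs ((0:Fin 3),(0:Fin 4))).1 (hs ((0:Fin 3),(0:Fin 4))).2 (show X7 5 ((0:Fin 3),(0:Fin 4)) = 0 from by decide)
  have b01 := memZ _ _ (hs ((0:Fin 3),(1:Fin 4))).1 (hs ((0:Fin 3),(1:Fin 4))).2 (show X7 5 ((0:Fin 3),(1:Fin 4)) = 0 from by decide)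
  have b02 := memP _ _ (hs ((0:Fin 3),(2:Fin 4))).1 (hs ((0:Fin 3),(2:Fin 4))).2 (show X7 5 ((0:Fin 3),(2:Fin 4)) = 1 from by decide)
  have b03 := memN _ _ (hs ((0:Fin 3),(3:Fin 4))).1 (hs ((0:Fin 3),(3:Fin 4))).2 (show X7 5 ((0:Fin 3),(3:Fin 4)) = -1 from by decide)
  have b10 := memP _ _ (hs ((1:Fin 3),(0:Fin 4))).1 (hs ((1:Fin 3),(0:Fin 4))).2 (show X7 5 ((1:Fin 3),(0:Fin 4)) = 1 from by decide)
  have b11 := memZ _ _ (hs ((1:Fin 3),(1:Fin 4))).1 (hs ((1:Fin 3),(1:Fin 4))).2 (show X7 5 ((1:Fin 3),(1:Fin 4)) = 0 from by decide)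
  have b12 := memN _ _ (hs ((1:Fin 3),(2:Fin 4))).1 (hs ((1:Fin 3),(2:Fin 4))).2 (show X7 5 ((1:Fin 3),(2:Fin 4)) = -1 from by decide)
  have b13 := memZ _ _ (hs ((1:Fin 3),(3:Fin 4))).1 (hs ((1:Fin 3),(3:Fin 4))).2 (show X7 5 ((1:Fin 3),(3:Fin 4)) = 0 from by decide)
  have b20 := memN _ _ (hs ((2:Fin 3),(0:Fin 4))).1 (hs ((2:Fin 3),(0:Fin 4))).2 (show X7 5 ((2:Fin 3),(0:Fin 4)) = -1 from by decide)
  have b21 := memZ _ _ (hs ((2:Fin 3),(1:Fin 4))).1 (hs ((2:Fin 3),(1:Fin 4))).2 (show X7 5 ((2:Fin 3),(1:Fin 4)) = 0 from by decide)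
  have b22 := memZ _ _ (hs ((2:Fin 3),(2:Fin 4))).1 (hs ((2:Fin 3),(2:Fin 4))).2 (show X7 5 ((2:Fin 3),(2:Fin 4)) = 0 from by decide)
  have b23 := memP _ _ (hs ((2:Fin 3),(3:Fin 4))).1 (hs ((2:Fin 3),(3:Fin 4))).2 (show X7 5 ((2:Fin 3),(3:Fin 4)) = 1 from by decide)
  have key := key5 (w (0,0)) (w (0,1)) (w (0,2)) (w (0,3)) (w (1,0)) (w (1,1)) (w (1,2)) (w (1,3)) (w (2,0)) (w (2,1)) (w (2,2)) (w (2,3)) b00 b01 b02 b03 b10 b11 b12 b13 b20 b21 b22 b23 m0 m1 m2 m3 m4 m5 m6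
  rcases key with ⟨e0, e1, e2, e3, e4, e5, e6, e7, e8, e9, e10, e11⟩ | ⟨e0, e1, e2, e3, e4, e5, e6, e7, e8, e9, e10, e11⟩
  · left
    funext p
    rcases enumP p with rfl|rfl|rfl|rfl|rfl|rfl|rfl|rfl|rfl|rfl|rfl|rfl
    exacts [e0, e1, e2, e3, e4, e5, e6, e7, e8, e9, e10, e11]
  · right
    funext p
    rcases enumP p with rfl|rfl|rfl|rfl|rfl|rfl|rfl|rfl|rfl|rfl|rfl|rfl
    exacts [e0.trans (by decide), e1.trans (by decide), e2.trans (by decide), e3.trans (by decide), e4.trans (by decide), e5.trans (by decide), e6.trans (by decide), e7.trans (by decide), e8.trans (by decide), e9.trans (by decide), e10.trans (by decide), e11.trans (by decide)]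

lemma key6 (w00 w01 w02 w03 w10 w11 w12 w13 w20 w21 w22 w23 : ℤ)
    (b00 : -1 ≤ w00 ∧ w00 ≤ 0) (b01 : w01 = 0) (b02 : w02 = 0)
    (b03 : 0 ≤ w03 ∧ w03 ≤ 1) (b10 : w10 = 0) (b11 : w11 = 0)
    (b12 : 0 ≤ w12 ∧ w12 ≤ 1) (b13 : -1 ≤ w13 ∧ w13 ≤ 0) (b20 : 0 ≤ w20 ∧ w20 ≤ 1)
    (b21 : w21 = 0) (b22 : -1 ≤ w22 ∧ w22 ≤ 0) (b23 : w23 = 0)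
    (m0 : w00 + w01 + w02 + w03 = 0) (m1 : w10 + w11 + w12 + w13 = 0) (m2 : w20 + w21 + w22 + w23 = 0)
    (n0 : w00 + w10 + w20 = 0) (n1 : w01 + w11 + w21 = 0) (n2 : w02 + w12 + w22 = 0)
    (n3 : w03 + w13 + w23 = 0) :
    (w00 = 0 ∧ w01 = 0 ∧ w02 = 0 ∧ w03 = 0 ∧ w10 = 0 ∧ w11 = 0 ∧ w12 = 0 ∧ w13 = 0 ∧ w20 = 0 ∧ w21 = 0 ∧ w22 = 0 ∧ w23 = 0) ∨ (w00 = -1 ∧ w01 = 0 ∧ w02 = 0 ∧ w03 = 1 ∧ w10 = 0 ∧ w11 = 0 ∧ w12 = 1 ∧ w13 = -1 ∧ w20 = 1 ∧ w21 = 0 ∧ w22 = -1 ∧ w23 = 0) := by omega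

lemma circ6 (w : Fin 3 × Fin 4 → ℤ) (hker : (incidence 3 4).mulVec w = 0)
    (hs : sqle w (X7 6)) : w = 0 ∨ w = X7 6 := by
  obtain ⟨m0, m1, m2, m3, m4, m5, m6⟩ := margins w hker
  have b00 := memN _ _ (hs ((0:Fin 3),(0:Fin 4))).1 (hs ((0:Fin 3),(0:Fin 4))).2 (show X7 6 ((0:Fin 3),(0:Fin 4)) = -1 from by decide)
  have b01 := memZ _ _ (hs ((0:Fin 3),(1:Fin 4))).1 (hs ((0:Fin 3),(1:Fin 4))).2 (show X7 6 ((0:Fin 3),(1:Fin 4)) = 0 from by decide)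
  have b02 := memZ _ _ (hs ((0:Fin 3),(2:Fin 4))).1 (hs ((0:Fin 3),(2:Fin 4))).2 (show X7 6 ((0:Fin 3),(2:Fin 4)) = 0 from by decide)
  have b03 := memP _ _ (hs ((0:Fin 3),(3:Fin 4))).1 (hs ((0:Fin 3),(3:Fin 4))).2 (show X7 6 ((0:Fin 3),(3:Fin 4)) = 1 from by decide)
  have b10 := memZ _ _ (hs ((1:Fin 3),(0:Fin 4))).1 (hs ((1:Fin 3),(0:Fin 4))).2 (show X7 6 ((1:Fin 3),(0:Fin 4)) = 0 from by decide)
  have b11 := memZ _ _ (hs ((1:Fin 3),(1:Fin 4))).1 (hs ((1:Fin 3),(1:Fin 4))).2 (show X7 6 ((1:Fin 3),(1:Fin 4)) = 0 from by decide)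
  have b12 := memP _ _ (hs ((1:Fin 3),(2:Fin 4))).1 (hs ((1:Fin 3),(2:Fin 4))).2 (show X7 6 ((1:Fin 3),(2:Fin 4)) = 1 from by decide)
  have b13 := memN _ _ (hs ((1:Fin 3),(3:Fin 4))).1 (hs ((1:Fin 3),(3:Fin 4))).2 (show X7 6 ((1:Fin 3),(3:Fin 4)) = -1 from by decide)
  have b20 := memP _ _ (hs ((2:Fin 3),(0:Fin 4))).1 (hs ((2:Fin 3),(0:Fin 4))).2 (show X7 6 ((2:Fin 3),(0:Fin 4)) = 1 from by decide)
  have b21 := memZ _ _ (hs ((2:Fin 3),(1:Fin 4))).1 (hs ((2:Fin 3),(1:Fin 4))).2 (show X7 6 ((2:Fin 3),(1:Fin 4)) = 0 from by decide)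
  have b22 := memN _ _ (hs ((2:Fin 3),(2:Fin 4))).1 (hs ((2:Fin 3),(2:Fin 4))).2 (show X7 6 ((2:Fin 3),(2:Fin 4)) = -1 from by decide)
  have b23 := memZ _ _ (hs ((2:Fin 3),(3:Fin 4))).1 (hs ((2:Fin 3),(3:Fin 4))).2 (show X7 6 ((2:Fin 3),(3:Fin 4)) = 0 from by decide)
  have key := key6 (w (0,0)) (w (0,1)) (w (0,2)) (w (0,3)) (w (1,0)) (w (1,1)) (w (1,2)) (w (1,3)) (w (2,0)) (w (2,1)) (w (2,2)) (w (2,3)) b00 b01 b02 b03 b10 b11 b12 b13 b20 b21 b22 b23 m0 m1 m2 m3 m4 m5 m6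
  rcases key with ⟨e0, e1, e2, e3, e4, e5, e6, e7, e8, e9, e10, e11⟩ | ⟨e0, e1, e2, e3, e4, e5, e6, e7, e8, e9, e10, e11⟩
  · left
    funext p
    rcases enumP p with rfl|rfl|rfl|rfl|rfl|rfl|rfl|rfl|rfl|rfl|rfl|rfl
    exacts [e0, e1, e2, e3, e4, e5, e6, e7, e8, e9, e10, e11]
  · right
    funext p
    rcases enumP p with rfl|rfl|rfl|rfl|rfl|rfl|rfl|rfl|rfl|rfl|rfl|rfl
    exacts [e0.trans (by decide), e1.trans (by decide), e2.trans (by decide), e3.trans (by decide), e4.trans (by decide), e5.trans (by decide), e6.trans (by decide), e7.trans (by decide), e8.trans (by decide), e9.trans (by decide), e10.trans (by decide), e11.trans (by decide)]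

lemma circAll (k : Fin 7) (w : Fin 3 × Fin 4 → ℤ)
    (hker : (incidence 3 4).mulVec w = 0) (hs : sqle w (X7 k)) : w = 0 ∨ w = X7 k := by
  fin_cases k
  exacts [circ0 w hker hs, circ1 w hker hs, circ2 w hker hs, circ3 w hker hs,
    circ4 w hker hs, circ5 w hker hs, circ6 w hker hs]

set_option maxHeartbeats 1000000 in
lemma rel7 (d : Fin 7 → ℕ) (h0 : d 0 ≤ 1) (h1 : d 1 ≤ 2) (h2 : d 2 ≤ 3) (h3 : d 3 ≤ 3) (h4 : d 4 ≤ 5) (h5 : d 5 ≤ 6) (h6 : d 6 ≤ 7)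
    (heq : ∀ b : Fin 3 × Fin 4, ∑ k : Fin 7, (d k : ℤ) * X7 k b = 0) :
    (d 0 = 0 ∧ d 1 = 0 ∧ d 2 = 0 ∧ d 3 = 0 ∧ d 4 = 0 ∧ d 5 = 0 ∧ d 6 = 0) ∨ (d 0 = 1 ∧ d 1 = 2 ∧ d 2 = 3 ∧ d 3 = 3 ∧ d 4 = 5 ∧ d 5 = 6 ∧ d 6 = 7) := by
  have e0 := heq ((0:Fin 3),(0:Fin 4))
  rw [Fin.sum_univ_seven] at e0
  simp only [show (X7 0 ((0:Fin 3),(0:Fin 4)) : ℤ) = 1 from by decide, show (X7 1 ((0:Fin 3),(0:Fin 4)) : ℤ) = 0 from by decide, show (X7 2 ((0:Fin 3),(0:Fin 4)) : ℤ) = 1 from by decide, show (X7 3 ((0:Fin 3),(0:Fin 4)) : ℤ) = 1 from by decide, show (X7 4 ((0:Fin 3),(0:Fin 4)) : ℤ) = 0 from by decide, show (X7 5 ((0:Fin 3),(0:Fin 4)) : ℤ) = 0 from by decide, show (X7 6 ((0:Fin 3),(0:Fin 4)) : ℤ) = -1 from by decide] at e0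
  have e1 := heq ((0:Fin 3),(1:Fin 4))
  rw [Fin.sum_univ_seven] at e1
  simp only [show (X7 0 ((0:Fin 3),(1:Fin 4)) : ℤ) = 0 from by decide, show (X7 1 ((0:Fin 3),(1:Fin 4)) : ℤ) = -1 from by decide, show (X7 2 ((0:Fin 3),(1:Fin 4)) : ℤ) = 0 from by decide, show (X7 3 ((0:Fin 3),(1:Fin 4)) : ℤ) = -1 from by decide, show (X7 4 ((0:Fin 3),(1:Fin 4)) : ℤ) = 1 from by decide, show (X7 5 ((0:Fin 3),(1:Fin 4)) : ℤ) = 0 from by decide, show (X7 6 ((0:Fin 3),(1:Fin 4)) : ℤ) = 0 from by decide] at e1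
  have e2 := heq ((0:Fin 3),(2:Fin 4))
  rw [Fin.sum_univ_seven] at e2
  simp only [show (X7 0 ((0:Fin 3),(2:Fin 4)) : ℤ) = -1 from by decide, show (X7 1 ((0:Fin 3),(2:Fin 4)) : ℤ) = 0 from by decide, show (X7 2 ((0:Fin 3),(2:Fin 4)) : ℤ) = 0 from by decide, show (X7 3 ((0:Fin 3),(2:Fin 4)) : ℤ) = 0 from by decide, show (X7 4 ((0:Fin 3),(2:Fin 4)) : ℤ) = -1 from by decide, show (X7 5 ((0:Fin 3),(2:Fin 4)) : ℤ) = 1 from by decide, show (X7 6 ((0:Fin 3),(2:Fin 4)) : ℤ) = 0 from by decide] at e2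
  have e3 := heq ((0:Fin 3),(3:Fin 4))
  rw [Fin.sum_univ_seven] at e3
  simp only [show (X7 0 ((0:Fin 3),(3:Fin 4)) : ℤ) = 0 from by decide, show (X7 1 ((0:Fin 3),(3:Fin 4)) : ℤ) = 1 from by decide, show (X7 2 ((0:Fin 3),(3:Fin 4)) : ℤ) = -1 from by decide, show (X7 3 ((0:Fin 3),(3:Fin 4)) : ℤ) = 0 from by decide, show (X7 4 ((0:Fin 3),(3:Fin 4)) : ℤ) = 0 from by decide, show (X7 5 ((0:Fin 3),(3:Fin 4)) : ℤ) = -1 from by decide, show (X7 6 ((0:Fin 3),(3:Fin 4)) : ℤ) = 1 from by decide] at e3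
  have e4 := heq ((1:Fin 3),(0:Fin 4))
  rw [Fin.sum_univ_seven] at e4
  simp only [show (X7 0 ((1:Fin 3),(0:Fin 4)) : ℤ) = 0 from by decide, show (X7 1 ((1:Fin 3),(0:Fin 4)) : ℤ) = 0 from by decide, show (X7 2 ((1:Fin 3),(0:Fin 4)) : ℤ) = -1 from by decide, show (X7 3 ((1:Fin 3),(0:Fin 4)) : ℤ) = -1 from by decide, show (X7 4 ((1:Fin 3),(0:Fin 4)) : ℤ) = 0 from by decide, show (X7 5 ((1:Fin 3),(0:Fin 4)) : ℤ) = 1 from by decide, show (X7 6 ((1:Fin 3),(0:Fin 4)) : ℤ) = 0 from by decide] at e4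
  have e5 := heq ((1:Fin 3),(1:Fin 4))
  rw [Fin.sum_univ_seven] at e5
  simp only [show (X7 0 ((1:Fin 3),(1:Fin 4)) : ℤ) = 0 from by decide, show (X7 1 ((1:Fin 3),(1:Fin 4)) : ℤ) = 1 from by decide, show (X7 2 ((1:Fin 3),(1:Fin 4)) : ℤ) = 1 from by decide, show (X7 3 ((1:Fin 3),(1:Fin 4)) : ℤ) = 0 from by decide, show (X7 4 ((1:Fin 3),(1:Fin 4)) : ℤ) = -1 from by decide, show (X7 5 ((1:Fin 3),(1:Fin 4)) : ℤ) = 0 from by decide, show (X7 6 ((1:Fin 3),(1:Fin 4)) : ℤ) = 0 from by decide] at e5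
  have e6 := heq ((1:Fin 3),(2:Fin 4))
  rw [Fin.sum_univ_seven] at e6
  simp only [show (X7 0 ((1:Fin 3),(2:Fin 4)) : ℤ) = 1 from by decide, show (X7 1 ((1:Fin 3),(2:Fin 4)) : ℤ) = -1 from by decide, show (X7 2 ((1:Fin 3),(2:Fin 4)) : ℤ) = 0 from by decide, show (X7 3 ((1:Fin 3),(2:Fin 4)) : ℤ) = 0 from by decide, show (X7 4 ((1:Fin 3),(2:Fin 4)) : ℤ) = 0 from by decide, show (X7 5 ((1:Fin 3),(2:Fin 4)) : ℤ) = -1 from by decide, show (X7 6 ((1:Fin 3),(2:Fin 4)) : ℤ) = 1 from by decide] at e6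
  have e7 := heq ((1:Fin 3),(3:Fin 4))
  rw [Fin.sum_univ_seven] at e7
  simp only [show (X7 0 ((1:Fin 3),(3:Fin 4)) : ℤ) = -1 from by decide, show (X7 1 ((1:Fin 3),(3:Fin 4)) : ℤ) = 0 from by decide, show (X7 2 ((1:Fin 3),(3:Fin 4)) : ℤ) = 0 from by decide, show (X7 3 ((1:Fin 3),(3:Fin 4)) : ℤ) = 1 from by decide, show (X7 4 ((1:Fin 3),(3:Fin 4)) : ℤ) = 1 from by decide, show (X7 5 ((1:Fin 3),(3:Fin 4)) : ℤ) = 0 from by decide, show (X7 6 ((1:Fin 3),(3:Fin 4)) : ℤ) = -1 from by decide] at e7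
  have e8 := heq ((2:Fin 3),(0:Fin 4))
  rw [Fin.sum_univ_seven] at e8
  simp only [show (X7 0 ((2:Fin 3),(0:Fin 4)) : ℤ) = -1 from by decide, show (X7 1 ((2:Fin 3),(0:Fin 4)) : ℤ) = 0 from by decide, show (X7 2 ((2:Fin 3),(0:Fin 4)) : ℤ) = 0 from by decide, show (X7 3 ((2:Fin 3),(0:Fin 4)) : ℤ) = 0 from by decide, show (X7 4 ((2:Fin 3),(0:Fin 4)) : ℤ) = 0 from by decide, show (X7 5 ((2:Fin 3),(0:Fin 4)) : ℤ) = -1 from by decide, show (X7 6 ((2:Fin 3),(0:Fin 4)) : ℤ) = 1 from by decide] at e8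
  have e9 := heq ((2:Fin 3),(1:Fin 4))
  rw [Fin.sum_univ_seven] at e9
  simp only [show (X7 0 ((2:Fin 3),(1:Fin 4)) : ℤ) = 0 from by decide, show (X7 1 ((2:Fin 3),(1:Fin 4)) : ℤ) = 0 from by decide, show (X7 2 ((2:Fin 3),(1:Fin 4)) : ℤ) = -1 from by decide, show (X7 3 ((2:Fin 3),(1:Fin 4)) : ℤ) = 1 from by decide, show (X7 4 ((2:Fin 3),(1:Fin 4)) : ℤ) = 0 from by decide, show (X7 5 ((2:Fin 3),(1:Fin 4)) : ℤ) = 0 from by decide, show (X7 6 ((2:Fin 3),(1:Fin 4)) : ℤ) = 0 from by decide] at e9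
  have e10 := heq ((2:Fin 3),(2:Fin 4))
  rw [Fin.sum_univ_seven] at e10
  simp only [show (X7 0 ((2:Fin 3),(2:Fin 4)) : ℤ) = 0 from by decide, show (X7 1 ((2:Fin 3),(2:Fin 4)) : ℤ) = 1 from by decide, show (X7 2 ((2:Fin 3),(2:Fin 4)) : ℤ) = 0 from by decide, show (X7 3 ((2:Fin 3),(2:Fin 4)) : ℤ) = 0 from by decide, show (X7 4 ((2:Fin 3),(2:Fin 4)) : ℤ) = 1 from by decide, show (X7 5 ((2:Fin 3),(2:Fin 4)) : ℤ) = 0 from by decide, show (X7 6 ((2:Fin 3),(2:Fin 4)) : ℤ) = -1 from by decide] at e10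
  have e11 := heq ((2:Fin 3),(3:Fin 4))
  rw [Fin.sum_univ_seven] at e11
  simp only [show (X7 0 ((2:Fin 3),(3:Fin 4)) : ℤ) = 1 from by decide, show (X7 1 ((2:Fin 3),(3:Fin 4)) : ℤ) = -1 from by decide, show (X7 2 ((2:Fin 3),(3:Fin 4)) : ℤ) = 1 from by decide, show (X7 3 ((2:Fin 3),(3:Fin 4)) : ℤ) = -1 from by decide, show (X7 4 ((2:Fin 3),(3:Fin 4)) : ℤ) = -1 from by decide, show (X7 5 ((2:Fin 3),(3:Fin 4)) : ℤ) = 1 from by decide, show (X7 6 ((2:Fin 3),(3:Fin 4)) : ℤ) = 0 from by decide] at e11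
  omega

open Finset in
lemma sum_indicator (e : Fin 27 → Prop) [DecidablePred e] (v : Fin 7 → ℤ) :
    ∑ i : Fin 27, (if e i then v (sg i) else 0)
      = ∑ k : Fin 7, ((univ.filter fun i => sg i = k ∧ e i).card : ℤ) * v k := by
  rw [← Finset.sum_fiberwise Finset.univ sg (fun i => if e i then v (sg i) else 0)]
  refine Finset.sum_congr rfl fun k _ => ?_
  rw [Finset.sum_congr rfl (fun i hi => show (if e i then v (sg i) else 0) = if e i then v k else 0
      by rw [(Finset.mem_filter.1 hi).2])]
  rw [Finset.sum_ite, Finset.sum_const_zero, add_zero, Finset.sum_const,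
    Finset.filter_filter, nsmul_eq_mul]

open Finset in
lemma fiber_card : ∀ k : Fin 7, (univ.filter fun i : Fin 27 => sg i = k).card =
    ![1,2,3,3,5,6,7] k := by decide

/-! ### Z is in the Graver basis of the 27-th Lawrence lifting -/

set_option maxHeartbeats 4000000 in
set_option maxRecDepth 100000 in
lemma Z_ker : (lawrence (incidence 3 4) 27).mulVec Z = 0 := by decide

open Finset in
lemma Z_min (y : Fin 27 × (Fin 3 × Fin 4) → ℤ)
    (hy : (lawrence (incidence 3 4) 27).mulVec y = 0) (hy0 : y ≠ 0) (hs : sqle y Z) : y = Z := by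
  classical
  have halt : ∀ i : Fin 27, (fun b => y (i, b)) = 0 ∨ (fun b => y (i, b)) = X7 (sg i) :=
    fun i => circAll (sg i) _ (blocks_ker hy i) (fun p => hs (i, p))
  set e : Fin 27 → Prop := fun i => (fun b => y (i, b)) = X7 (sg i) with he
  have key : ∀ i b, y (i, b) = if e i then X7 (sg i) b else 0 := by
    intro i b
    by_cases h : e i
    · rw [if_pos h]
      exact congrFun h b
    · rw [if_neg h]
      rcases halt i with h0 | h1
      · exact congrFun h0 b
      · exact absurd h1 h
  set d : Fin 7 → ℕ := fun k => (univ.filter fun i => sg i = k ∧ e i).card with hd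
  have hdle : ∀ k, d k ≤ ![1,2,3,3,5,6,7] k := by
    intro k
    rw [← fiber_card k]
    exact Finset.card_le_card (fun i hi => by
      simp only [Finset.mem_filter] at hi ⊢
      exact ⟨hi.1, hi.2.1⟩)
  have heq : ∀ b : Fin 3 × Fin 4, ∑ k : Fin 7, (d k : ℤ) * X7 k b = 0 := by
    intro b
    have h1 : (∑ i : Fin 27, y (i, b)) =
        ∑ i : Fin 27, (if e i then (fun k => X7 k b) (sg i) else 0) :=
      Finset.sum_congr rfl (fun i _ => key i b)
    have h2 := sum_indicator e (fun k => X7 k b)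
    rw [← h2, ← h1, cols_ker hy b]
  have hrel := rel7 d (hdle 0) (hdle 1) (hdle 2) (hdle 3) (hdle 4) (hdle 5) (hdle 6) heq
  rcases hrel with hz | hc
  · exfalso
    apply hy0
    have hno : ∀ i, ¬ e i := by
      intro i hei
      have hmem : i ∈ univ.filter (fun j => sg j = sg i ∧ e j) :=
        Finset.mem_filter.mpr ⟨Finset.mem_univ i, rfl, hei⟩
      have hpos : 0 < d (sg i) := Finset.card_pos.mpr ⟨i, hmem⟩
      have hzero : ∀ k, d k = 0 := by
        obtain ⟨a0,a1,a2,a3,a4,a5,a6⟩ := hz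
        intro k
        fin_cases k
        exacts [a0, a1, a2, a3, a4, a5, a6]
      have := hzero (sg i)
      omega
    funext p
    rw [show p = (p.1, p.2) from rfl, key p.1 p.2, if_neg (hno p.1)]
    rfl
  · have hall : ∀ i, e i := by
      intro i
      have hsub : (univ.filter fun j : Fin 27 => sg j = sg i ∧ e j) ⊆
          (univ.filter fun j : Fin 27 => sg j = sg i) :=
        fun j hj => by
          simp only [Finset.mem_filter] at hj ⊢
          exact ⟨hj.1, hj.2.1⟩
      have hcard : (univ.filter fun j : Fin 27 => sg j = sg i).card ≤
          (univ.filter fun j : Fin 27 => sg j = sg i ∧ e j).card := by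
        rw [fiber_card (sg i)]
        have hval : ∀ k, d k = ![1,2,3,3,5,6,7] k := by
          obtain ⟨a0,a1,a2,a3,a4,a5,a6⟩ := hc
          intro k
          fin_cases k
          exacts [a0, a1, a2, a3, a4, a5, a6]
        exact (hval (sg i)).symm.le
      have hEq := Finset.eq_of_subset_of_card_le hsub hcard
      have hmem : i ∈ (univ.filter fun j : Fin 27 => sg j = sg i) := by
        simp only [Finset.mem_filter, Finset.mem_univ, true_and]
      rw [← hEq] at hmem
      exact (Finset.mem_filter.1 hmem).2.2
    funext p
    rw [show p = (p.1, p.2) from rfl, key p.1 p.2, if_pos (hall p.1)]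
    rfl

lemma Z_ne_zero : Z ≠ 0 := by
  intro h
  exact absurd (congrFun h (0, (0, 0))) (by decide)

lemma Z_inGraver : inGraver (lawrence (incidence 3 4) 27) Z :=
  ⟨Z_ker, Z_ne_zero, Z_min⟩

lemma Z_type : typeOf Z = 27 := by
  have hall : ∀ i : Fin 27, ∃ b, Z (i, b) ≠ 0 := by decide
  rw [typeOf, Nat.card_congr (Equiv.subtypeUnivEquiv hall), Nat.card_eq_fintype_card,
    Fintype.card_fin]

theorem graverComplexity_A34_ge_27 : (27 : ℕ∞) ≤ graverComplexity (incidence 3 4) := by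
  apply le_sSup
  right
  exact ⟨27, by norm_num, Z, Z_inGraver, by rw [Z_type]; rfl⟩
end
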